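/- (Theorem 1, incentive compatibility) Suppose the effort-cost and payment functions h, P : ℝ → ℝ → ℝ satisfy payment condition (4). Then truth-telling is weakly dominant: for all θ, θ̄, θ′, γ ∈ ℝ there exists γ′ ∈ ℝ such that the utility from the truthful report is at least the utility from the deviation, i.e. (if θ < θ̄ then P(θ̄, γ′) − h(θ, γ′) else 0) ≥ (if θ′ < θ̄ then P(θ̄, γ) − h(θ, γ) else 0). -/

import Mathlib

/-!
A misreport only matters when it changes whether the agent is selected. If `θ < θ̄`, condition (b)
yields a realization with positive surplus, so being selected truthfully beats dropping out; if
`θ ≥ θ̄`, condition (a) makes every selected outcome worth at most `0`, the utility of staying out.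
-/

noncomputable def utility (h P : ℝ → ℝ → ℝ) (θ θbar θ' γ : ℝ) : ℝ :=
  if θ' < θbar then P θbar γ - h θ γ else 0

section

variable (h P : ℝ → ℝ → ℝ)

lemma utility_of_not_lt {θ θbar θ' : ℝ} (hθ' : ¬θ' < θbar) (γ : ℝ) :
    utility h P θ θbar θ' γ = 0 :=
  if_neg hθ'

lemma exists_truthful_utility_nonneg
    (cond_b : ∀ θ θbar : ℝ, θ < θbar → ∃ γ : ℝ, P θbar γ > h θ γ) (θ θbar : ℝ) :
    ∃ γ, 0 ≤ utility h P θ θbar θ γ := by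
  by_cases hθ : θ < θbar
  · obtain ⟨γ, hγ⟩ := cond_b θ θbar hθ
    exact ⟨γ, by simp only [utility, if_pos hθ]; linarith⟩
  · exact ⟨0, (utility_of_not_lt h P hθ 0).ge⟩

lemma utility_nonpos_of_le (cond_a : ∀ θ θbar γ : ℝ, θ ≥ θbar → P θbar γ ≤ h θ γ)
    {θ θbar : ℝ} (hθ : θbar ≤ θ) (θ' γ : ℝ) : utility h P θ θbar θ' γ ≤ 0 := by
  unfold utility
  split_ifs
  · linarith [cond_a θ θbar γ hθ]
  · rfl

end

/-- Theorem 1 (incentive compatibility). If the effort-cost `h` and payment `P`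
satisfy payment condition (4), then truth-telling is weakly dominant: for any
true misalignment `θ`, lowest competing bid `θ̄`, deviating report `θ'` and
realization `γ`, there is a realization `γ'` under truthful reporting whose
utility is at least the deviation utility. -/
theorem truth_telling_weakly_dominant
    (h P : ℝ → ℝ → ℝ)
    (cond_a : ∀ θ θbar γ : ℝ, θ ≥ θbar → P θbar γ ≤ h θ γ)
    (cond_b : ∀ θ θbar : ℝ, θ < θbar → ∃ γ : ℝ, P θbar γ > h θ γ) :
    ∀ θ θbar θ' γ : ℝ, ∃ γ' : ℝ,
      (if θ < θbar then P θbar γ' - h θ γ' else 0) ≥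
      (if θ' < θbar then P θbar γ - h θ γ else 0) := by
  intro θ θbar θ' γ
  change ∃ γ', utility h P θ θbar θ' γ ≤ utility h P θ θbar θ γ'
  by_cases hθ : θ < θbar
  · by_cases hθ' : θ' < θbar
    · exact ⟨γ, by simp only [utility, if_pos hθ, if_pos hθ', le_refl]⟩
    · obtain ⟨γ', hγ'⟩ := exists_truthful_utility_nonneg h P cond_b θ θbar
      exact ⟨γ', (utility_of_not_lt h P hθ' γ).trans_le hγ'⟩
  · refine ⟨γ, ?_⟩
    rw [utility_of_not_lt h P hθ]
    exact utility_nonpos_of_le h P cond_a (not_lt.mp hθ) θ' γ
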